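/- Let A have Spark(A) = L+1 and k ≤ L. Then γ(ℓ_p, A, k), as a function of p on [0,1], is right-continuous at every p ∈ [0,1): lim_{q→p⁺} γ(ℓ_q, A, k) = γ(ℓ_p, A, k). -/

import Mathlib

open Finset MeasureTheory Filter

/-- `phi p x = |x|^p`, with the convention `|x|^0 = 1` for `x ≠ 0` and `phi p 0 = 0`. -/
noncomputable def phi (p x : ℝ) : ℝ := if x = 0 then 0 else |x| ^ p

open Classical in
/-- support of a vector, as a finset -/
noncomputable def supp {n : ℕ} (z : Fin n → ℝ) : Finset (Fin n) :=
  Finset.univ.filter (fun i => z i ≠ 0)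

/-- `Spark(A) = s`: some `s` columns are linearly dependent (a kernel vector with support of
size `s`), and every nonzero kernel vector has support of size at least `s`. -/
def sparkEq {m n : ℕ} (A : Matrix (Fin m) (Fin n) ℝ) (s : ℕ) : Prop :=
  (∃ z, A.mulVec z = 0 ∧ z ≠ 0 ∧ (supp z).card = s) ∧
  (∀ z, A.mulVec z = 0 → z ≠ 0 → s ≤ (supp z).card)

/-- The set of constants `γ` satisfying the null space property inequality at level `k`. -/
def validNSC {m n : ℕ} (A : Matrix (Fin m) (Fin n) ℝ) (p : ℝ) (k : ℕ) : Set ℝ :=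
  {γ | ∀ S : Finset (Fin n), S.card ≤ k → ∀ z, A.mulVec z = 0 →
    ∑ i ∈ S, phi p (z i) ≤ γ * ∑ i ∈ Sᶜ, phi p (z i)}

/-- The null space constant `γ(ℓ_p, A, k)`: the smallest valid constant. -/
noncomputable def gammaNSC {m n : ℕ} (A : Matrix (Fin m) (Fin n) ℝ) (p : ℝ) (k : ℕ) : ℝ :=
  sInf (validNSC A p k)

/-- The ratio `θ(p, z, S)`. -/
noncomputable def theta {n : ℕ} (p : ℝ) (z : Fin n → ℝ) (S : Finset (Fin n)) : ℝ :=
  (∑ i ∈ S, phi p (z i)) / (∑ i ∈ Sᶜ, phi p (z i))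

open Topology

/-! For `p > 0` the map `(q, x) ↦ |x| ^ q` is jointly continuous at `(p, x)`, so on the compact
unit sphere of the null space the inequality `∑_S |w_i|^p < c ∑_{Sᶜ} |w_i|^p` (for any
`c > γ(ℓ_p, A, k)`) persists for `(q, w')` near `(p, w)`; a tube argument makes this uniform in `w`,
giving `γ(ℓ_q, A, k) ≤ c` for `q` close to `p`. At `p = 0` joint continuity fails at `x = 0`, but
the spark condition leaves every null vector at least `L + 1 - k` nonzero coordinates outside `S`;
these keep the denominator near `≥ L + 1 - k` for small `q > 0`, while the numerator stays `≤ k`,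
and `γ(ℓ_0, A, k) ≥ k / (L + 1 - k)` by a null vector of minimal support. The lower bound is
pointwise: a vector violating the inequality at `p` still violates it for nearby `q`. -/

section Phi

lemma phi_zero_right (p : ℝ) : phi p 0 = 0 := if_pos rfl

lemma phi_of_ne_zero {x : ℝ} (p : ℝ) (hx : x ≠ 0) : phi p x = |x| ^ p := if_neg hx

lemma phi_nonneg (p x : ℝ) : 0 ≤ phi p x := by
  unfold phi
  split_ifs <;> positivity

lemma phi_pos (p : ℝ) {x : ℝ} (hx : x ≠ 0) : 0 < phi p x := by
  rw [phi_of_ne_zero p hx]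
  exact Real.rpow_pos_of_pos (abs_pos.2 hx) p

lemma phi_zero_left (x : ℝ) : phi 0 x = if x ≠ 0 then 1 else 0 := by
  unfold phi
  split_ifs <;> simp_all

lemma phi_le_one {p x : ℝ} (hp : 0 ≤ p) (hx : |x| ≤ 1) : phi p x ≤ 1 := by
  unfold phi
  split_ifs
  exacts [zero_le_one, Real.rpow_le_one (abs_nonneg x) hx hp]

lemma phi_mul {c : ℝ} (p : ℝ) (hc : 0 < c) (x : ℝ) : phi p (c * x) = c ^ p * phi p x := by
  rcases eq_or_ne x 0 with rfl | hx
  · simp [phi_zero_right]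
  · rw [phi_of_ne_zero p (mul_ne_zero hc.ne' hx), phi_of_ne_zero p hx, abs_mul, abs_of_pos hc,
      Real.mul_rpow hc.le (abs_nonneg x)]

lemma continuous_phi_left (x : ℝ) : Continuous fun p => phi p x := by
  rcases eq_or_ne x 0 with rfl | hx
  · simp only [phi_zero_right]
    exact continuous_const
  · simp only [phi_of_ne_zero _ hx]
    exact continuous_const.rpow continuous_id fun _ => Or.inl (abs_ne_zero.2 hx)

/-- Away from the line `p = 0` the convention at `x = 0` is the limiting value. -/
lemma continuousAt_phi {p x : ℝ} (h : x ≠ 0 ∨ 0 < p) :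
    ContinuousAt (fun y : ℝ × ℝ => phi y.1 y.2) (p, x) := by
  have hrpow : ContinuousAt (fun y : ℝ × ℝ => |y.2| ^ y.1) (p, x) :=
    ContinuousAt.comp (f := fun y : ℝ × ℝ => (|y.2|, y.1)) (x := (p, x))
      (Real.continuousAt_rpow (|x|, p) (h.imp_left abs_ne_zero.2))
      (continuous_snd.abs.prodMk continuous_fst).continuousAt
  refine hrpow.congr_of_eventuallyEq ?_
  rcases h with hx | hp
  · filter_upwards [continuous_snd.continuousAt.eventually_ne hx] with y hy
    exact phi_of_ne_zero _ hy
  · filter_upwards [continuous_fst.continuousAt.eventually (lt_mem_nhds hp)] with y hy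
    unfold phi
    split_ifs with hy0
    · rw [hy0, abs_zero, Real.zero_rpow hy.ne']
    · rfl

lemma continuous_phi {p : ℝ} (hp : 0 < p) : Continuous (phi p) :=
  continuous_iff_continuousAt.2 fun _ =>
    (continuousAt_phi (Or.inr hp)).comp (Continuous.prodMk_right p).continuousAt

end Phi

section NullSpace

variable {M N L k : ℕ} {A : Matrix (Fin M) (Fin N) ℝ}

lemma mem_supp {z : Fin N → ℝ} {i : Fin N} : i ∈ supp z ↔ z i ≠ 0 := by
  simp [supp]

lemma sum_phi_zero_left (z : Fin N → ℝ) (T : Finset (Fin N)) :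
    ∑ i ∈ T, phi 0 (z i) = #(T ∩ supp z) := by
  simp only [phi_zero_left, Finset.sum_boole]
  congr 2
  ext i
  simp [mem_supp]

/-- The unit sphere of the null space, for the sup norm of `Fin N → ℝ`. -/
def nullSphere (A : Matrix (Fin M) (Fin N) ℝ) : Set (Fin N → ℝ) :=
  {z | A.mulVec z = 0} ∩ Metric.sphere 0 1

lemma isCompact_nullSphere : IsCompact (nullSphere A) :=
  (isCompact_sphere 0 1).inter_left (isClosed_eq (Continuous.matrix_mulVec continuous_const
    continuous_id) continuous_const)

lemma ne_zero_of_mem_nullSphere {z : Fin N → ℝ} (hz : z ∈ nullSphere A) : z ≠ 0 :=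
  ne_zero_of_mem_unit_sphere ⟨z, hz.2⟩

lemma abs_le_one_of_mem_nullSphere {z : Fin N → ℝ} (hz : z ∈ nullSphere A) (i : Fin N) :
    |z i| ≤ 1 := by
  simpa only [Real.norm_eq_abs] using
    (norm_le_pi_norm z i).trans_eq (mem_sphere_zero_iff_norm.1 hz.2)

lemma le_card_supp_sdiff (hspark : sparkEq A (L + 1)) {z : Fin N → ℝ} (hz : A.mulVec z = 0)
    (hz0 : z ≠ 0) (S : Finset (Fin N)) : L + 1 ≤ #(supp z \ S) + #S := by
  have := hspark.2 z hz hz0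
  have := Finset.le_card_sdiff S (supp z)
  omega

lemma sum_compl_phi_pos (hspark : sparkEq A (L + 1)) (hk : k ≤ L) (p : ℝ) {z : Fin N → ℝ}
    (hz : A.mulVec z = 0) (hz0 : z ≠ 0) {S : Finset (Fin N)} (hS : #S ≤ k) :
    0 < ∑ i ∈ Sᶜ, phi p (z i) := by
  obtain ⟨i, hi⟩ : (supp z \ S).Nonempty := by
    have := le_card_supp_sdiff hspark hz hz0 S
    exact Finset.card_pos.1 (by omega)
  rw [Finset.mem_sdiff, mem_supp] at hi
  exact Finset.sum_pos' (fun j _ => phi_nonneg p (z j))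
    ⟨i, Finset.mem_compl.2 hi.2, phi_pos p hi.1⟩

/-- By homogeneity of `phi p`. -/
lemma mem_validNSC_of_forall_nullSphere {p c : ℝ}
    (h : ∀ S : Finset (Fin N), #S ≤ k → ∀ w ∈ nullSphere A,
      ∑ i ∈ S, phi p (w i) ≤ c * ∑ i ∈ Sᶜ, phi p (w i)) :
    c ∈ validNSC A p k := by
  intro S hS z hz
  rcases eq_or_ne z 0 with rfl | hz0
  · simp [phi_zero_right]
  set t := ‖z‖⁻¹
  have ht : 0 < t := inv_pos.2 (norm_pos_iff.2 hz0)
  have hw : t • z ∈ nullSphere A :=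
    ⟨by simp [Matrix.mulVec_smul, hz], by simp [t, norm_smul, hz0]⟩
  have hscale : ∀ T : Finset (Fin N),
      ∑ i ∈ T, phi p ((t • z) i) = t ^ p * ∑ i ∈ T, phi p (z i) :=
    fun T => by simp only [Pi.smul_apply, smul_eq_mul, phi_mul p ht, Finset.mul_sum]
  have := h S hS _ hw
  rw [hscale, hscale, mul_left_comm] at this
  exact le_of_mul_le_mul_left this (Real.rpow_pos_of_pos ht p)

lemma nonneg_of_mem_validNSC (hspark : sparkEq A (L + 1)) (hk : k ≤ L) {p c : ℝ}
    (hc : c ∈ validNSC A p k) : 0 ≤ c := by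
  obtain ⟨z, hz, hz0, -⟩ := hspark.1
  have hden := sum_compl_phi_pos hspark hk p hz hz0 (S := ∅) (by simp)
  have := hc ∅ (by simp) z hz
  rw [Finset.sum_empty] at this
  exact nonneg_of_mul_nonneg_left this hden

lemma bddBelow_validNSC (hspark : sparkEq A (L + 1)) (hk : k ≤ L) (p : ℝ) :
    BddBelow (validNSC A p k) :=
  ⟨0, fun _ => nonneg_of_mem_validNSC hspark hk⟩

lemma isClosed_validNSC (p : ℝ) : IsClosed (validNSC A p k) := by
  simp only [validNSC, Set.ofPred_forall]
  exact isClosed_iInter fun S => isClosed_iInter fun _ => isClosed_iInter fun z =>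
    isClosed_iInter fun _ => isClosed_le continuous_const (continuous_mul_const _)

lemma natCast_mem_validNSC_zero (hspark : sparkEq A (L + 1)) (hk : k ≤ L) :
    (k : ℝ) ∈ validNSC A 0 k := by
  refine mem_validNSC_of_forall_nullSphere fun S hS w hw => ?_
  have hw0 := ne_zero_of_mem_nullSphere hw
  have := le_card_supp_sdiff hspark hw.1 hw0 S
  have hcard : #(supp w \ S) ≤ #(Sᶜ ∩ supp w) :=
    Finset.card_le_card fun i hi => by simp_all [Finset.mem_sdiff]
  rw [sum_phi_zero_left, sum_phi_zero_left]
  calc (#(S ∩ supp w) : ℝ) ≤ k := by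
        exact_mod_cast (Finset.card_le_card inter_subset_left).trans hS
    _ ≤ k * #(Sᶜ ∩ supp w) := le_mul_of_one_le_right (by positivity) (by exact_mod_cast by omega)

lemma validNSC_nonempty_of_pos (hspark : sparkEq A (L + 1)) (hk : k ≤ L) {p : ℝ} (hp : 0 < p) :
    (validNSC A p k).Nonempty := by
  have hsum : ∀ T : Finset (Fin N), Continuous fun w : Fin N → ℝ => ∑ i ∈ T, phi p (w i) :=
    fun T => continuous_finsetSum T fun i _ => (continuous_phi hp).comp (continuous_apply i)
  have hS : ∀ S : Finset (Fin N), ∀ᶠ c in atTop, #S ≤ k → ∀ w ∈ nullSphere A,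
      ∑ i ∈ S, phi p (w i) ≤ c * ∑ i ∈ Sᶜ, phi p (w i) := by
    refine fun S => Filter.eventually_imp_distrib_left.2 fun hS => ?_
    have hden : ∀ w ∈ nullSphere A, 0 < ∑ i ∈ Sᶜ, phi p (w i) := fun w hw =>
      sum_compl_phi_pos hspark hk p hw.1 (ne_zero_of_mem_nullSphere hw) hS
    obtain ⟨B, hB⟩ := isCompact_nullSphere.bddAbove_image (f := fun w => theta p w S)
      ((hsum S).continuousOn.div (hsum Sᶜ).continuousOn fun w hw => (hden w hw).ne')
    filter_upwards [eventually_ge_atTop B] with c hc w hw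
    exact (div_le_iff₀ (hden w hw)).1 ((hB ⟨w, hw, rfl⟩).trans hc)
  obtain ⟨c, hc⟩ := (Filter.eventually_all.2 hS).exists
  exact ⟨c, mem_validNSC_of_forall_nullSphere hc⟩

lemma gammaNSC_mem_validNSC (hspark : sparkEq A (L + 1)) (hk : k ≤ L) {p : ℝ} (hp : 0 ≤ p) :
    gammaNSC A p k ∈ validNSC A p k := by
  have hne : (validNSC A p k).Nonempty := by
    rcases hp.eq_or_lt with rfl | hp
    · exact ⟨k, natCast_mem_validNSC_zero hspark hk⟩
    · exact validNSC_nonempty_of_pos hspark hk hp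
  exact (isClosed_validNSC p).csInf_mem hne (bddBelow_validNSC hspark hk p)

/-- Split the support of a minimal null vector into `k` and `L + 1 - k` entries. -/
lemma natCast_le_gammaNSC_zero_mul (hspark : sparkEq A (L + 1)) (hk : k ≤ L) :
    (k : ℝ) ≤ gammaNSC A 0 k * (L + 1 - k) := by
  obtain ⟨z, hz, -, hcard⟩ := hspark.1
  obtain ⟨S, hSz, hS⟩ := Finset.exists_subset_card_eq (s := supp z) (n := k) (by omega)
  have := gammaNSC_mem_validNSC hspark hk le_rfl S hS.le z hz
  rwa [sum_phi_zero_left, sum_phi_zero_left, Finset.inter_eq_left.2 hSz, hS, Finset.inter_comm,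
    ← Finset.sdiff_eq_inter_compl, Finset.card_sdiff_of_subset hSz, hcard, hS,
    Nat.cast_sub (by omega), Nat.cast_succ] at this

lemma continuousAt_sum_phi {p : ℝ} {w : Fin N → ℝ} {T : Finset (Fin N)}
    (h : ∀ i ∈ T, w i ≠ 0 ∨ 0 < p) :
    ContinuousAt (fun y : ℝ × (Fin N → ℝ) => ∑ i ∈ T, phi y.1 (y.2 i)) (p, w) :=
  tendsto_finsetSum T fun i hi =>
    ContinuousAt.comp (f := fun y : ℝ × (Fin N → ℝ) => (y.1, y.2 i)) (x := (p, w))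
      (continuousAt_phi (h i hi))
      (continuous_fst.prodMk ((continuous_apply i).comp continuous_snd)).continuousAt

lemma eventually_lt_gammaNSC (hspark : sparkEq A (L + 1)) (hk : k ≤ L) {p c : ℝ}
    (hc : c < gammaNSC A p k) : ∀ᶠ q in 𝓝 p, 0 ≤ q → c < gammaNSC A q k := by
  have hc' : c ∉ validNSC A p k := fun h => (csInf_le (bddBelow_validNSC hspark hk p) h).not_gt hc
  simp only [validNSC, Set.mem_ofPred_eq, not_forall, not_le] at hc'
  obtain ⟨S, hS, z, hz, hlt⟩ := hc'
  have hsum : ∀ T : Finset (Fin N), Continuous fun q => ∑ i ∈ T, phi q (z i) :=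
    fun T => continuous_finsetSum T fun i _ => continuous_phi_left (z i)
  have hF : Continuous fun q => ∑ i ∈ S, phi q (z i) - c * ∑ i ∈ Sᶜ, phi q (z i) :=
    (hsum S).sub (continuous_const.mul (hsum Sᶜ))
  filter_upwards [hF.continuousAt.eventually (lt_mem_nhds (sub_pos.2 hlt))] with q hq hq0
  have hγ := gammaNSC_mem_validNSC hspark hk hq0 S hS z hz
  exact lt_of_mul_lt_mul_right (a := ∑ i ∈ Sᶜ, phi q (z i)) (by linarith)
    (Finset.sum_nonneg fun i _ => phi_nonneg q (z i))

lemma eventually_sum_phi_lt_of_pos (hspark : sparkEq A (L + 1)) (hk : k ≤ L) {p c : ℝ}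
    (hp : 0 < p) (hc : gammaNSC A p k < c) {S : Finset (Fin N)} (hS : #S ≤ k) {w : Fin N → ℝ}
    (hw : A.mulVec w = 0) (hw0 : w ≠ 0) :
    ∀ᶠ y : ℝ × (Fin N → ℝ) in 𝓝 (p, w),
      ∑ i ∈ S, phi y.1 (y.2 i) < c * ∑ i ∈ Sᶜ, phi y.1 (y.2 i) := by
  have hden := sum_compl_phi_pos hspark hk p hw hw0 hS
  have hγ := gammaNSC_mem_validNSC hspark hk hp.le S hS w hw
  have hpos : 0 < c * ∑ i ∈ Sᶜ, phi p (w i) - ∑ i ∈ S, phi p (w i) := by nlinarith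
  filter_upwards [(((continuousAt_sum_phi fun i _ => Or.inr hp).const_mul c).sub
    (continuousAt_sum_phi fun i _ => Or.inr hp)).eventually (lt_mem_nhds hpos)] with y hy
  exact sub_pos.1 hy

lemma eventually_sum_phi_lt_of_zero (hspark : sparkEq A (L + 1)) (hk : k ≤ L) {c : ℝ}
    (hc : gammaNSC A 0 k < c) {S : Finset (Fin N)} (hS : #S ≤ k) {w : Fin N → ℝ}
    (hw : w ∈ nullSphere A) :
    ∀ᶠ y : ℝ × (Fin N → ℝ) in 𝓝 (0, w), 0 < y.1 → y.2 ∈ nullSphere A →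
      ∑ i ∈ S, phi y.1 (y.2 i) < c * ∑ i ∈ Sᶜ, phi y.1 (y.2 i) := by
  set T := supp w \ S
  have hc0 : 0 ≤ c :=
    (nonneg_of_mem_validNSC hspark hk (gammaNSC_mem_validNSC hspark hk le_rfl)).trans hc.le
  have hcard : (L + 1 - k : ℝ) ≤ #T := by
    have : L + 1 ≤ #T + k :=
      (le_card_supp_sdiff hspark hw.1 (ne_zero_of_mem_nullSphere hw) S).trans
        (Nat.add_le_add_left hS _)
    rw [sub_le_iff_le_add]
    exact_mod_cast this
  have hlim : (k : ℝ) < c * ∑ i ∈ T, phi 0 (w i) := by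
    rw [sum_phi_zero_left, Finset.inter_eq_left.2 Finset.sdiff_subset]
    calc (k : ℝ) ≤ gammaNSC A 0 k * (L + 1 - k) := natCast_le_gammaNSC_zero_mul hspark hk
      _ < c * (L + 1 - k) :=
        mul_lt_mul_of_pos_right hc (by linarith [(Nat.cast_le (α := ℝ)).2 hk])
      _ ≤ c * #T := mul_le_mul_of_nonneg_left hcard hc0
  have hT : ∀ i ∈ T, w i ≠ 0 ∨ (0 : ℝ) < 0 :=
    fun i hi => Or.inl (mem_supp.1 (Finset.mem_sdiff.1 hi).1)
  filter_upwards [((continuousAt_sum_phi hT).const_mul c).eventually (lt_mem_nhds hlim)]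
    with y hy hpos hyC
  calc ∑ i ∈ S, phi y.1 (y.2 i) ≤ #S • (1 : ℝ) := Finset.sum_le_card_nsmul _ _ _ fun i _ =>
        phi_le_one hpos.le (abs_le_one_of_mem_nullSphere hyC i)
    _ ≤ k := by simpa using (Nat.cast_le (α := ℝ)).2 hS
    _ < c * ∑ i ∈ T, phi y.1 (y.2 i) := hy
    _ ≤ c * ∑ i ∈ Sᶜ, phi y.1 (y.2 i) := mul_le_mul_of_nonneg_left
        (Finset.sum_le_sum_of_subset_of_nonneg (fun i hi => Finset.mem_compl.2
          (Finset.mem_sdiff.1 hi).2) fun i _ _ => phi_nonneg _ _) hc0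

lemma eventually_sum_phi_lt (hspark : sparkEq A (L + 1)) (hk : k ≤ L) {p c : ℝ} (hp : 0 ≤ p)
    (hc : gammaNSC A p k < c) {S : Finset (Fin N)} (hS : #S ≤ k) {w : Fin N → ℝ}
    (hw : w ∈ nullSphere A) :
    ∀ᶠ y : ℝ × (Fin N → ℝ) in 𝓝 (p, w), p < y.1 → y.2 ∈ nullSphere A →
      ∑ i ∈ S, phi y.1 (y.2 i) < c * ∑ i ∈ Sᶜ, phi y.1 (y.2 i) := by
  rcases hp.eq_or_lt with rfl | hp
  · exact eventually_sum_phi_lt_of_zero hspark hk hc hS hw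
  · exact (eventually_sum_phi_lt_of_pos hspark hk hp hc hS hw.1
      (ne_zero_of_mem_nullSphere hw)).mono fun _ h _ _ => h

lemma eventually_mem_validNSC (hspark : sparkEq A (L + 1)) (hk : k ≤ L) {p c : ℝ} (hp : 0 ≤ p)
    (hc : gammaNSC A p k < c) : ∀ᶠ q in 𝓝[>] p, c ∈ validNSC A q k := by
  filter_upwards [nhdsWithin_le_nhds (isCompact_nullSphere.eventually_forall_of_forall_eventually
      (P := fun q w => ∀ S : Finset (Fin N), #S ≤ k → p < q → w ∈ nullSphere A →
        ∑ i ∈ S, phi q (w i) < c * ∑ i ∈ Sᶜ, phi q (w i))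
      fun w hw => Filter.eventually_all.2 fun _ => Filter.eventually_imp_distrib_left.2 fun hS =>
        eventually_sum_phi_lt hspark hk hp hc hS hw), self_mem_nhdsWithin] with q hq hpq
  exact mem_validNSC_of_forall_nullSphere fun S hS w hw => (hq w hw S hS hpq hw).le

end NullSpace

/-- right-continuity of p ↦ γ(ℓ_p,A,k) at every p ∈ [0,1). -/
theorem stmt7 {M N L : ℕ} (A : Matrix (Fin M) (Fin N) ℝ) (hspark : sparkEq A (L + 1))
    (k : ℕ) (hk : k ≤ L) (p : ℝ) (hp : p ∈ Set.Ico (0 : ℝ) 1) :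
    Tendsto (fun q => gammaNSC A q k) (nhdsWithin p (Set.Ioc p 1))
      (nhds (gammaNSC A p k)) := by
  refine tendsto_order.2 ⟨fun c hc => ?_, fun c hc => ?_⟩
  · filter_upwards [nhdsWithin_le_nhds (eventually_lt_gammaNSC hspark hk hc),
      self_mem_nhdsWithin] with q hq hpq
    exact hq (hp.1.trans hpq.1.le)
  · obtain ⟨c', hc', hc'c⟩ := exists_between hc
    filter_upwards [nhdsWithin_mono p Set.Ioc_subset_Ioi_self
      (eventually_mem_validNSC hspark hk hp.1 hc')] with q hq
    exact (csInf_le (bddBelow_validNSC hspark hk q) hq).trans_lt hc'c
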